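/- For k ≥ r ≥ 3 and p,t ≥ 0, if π is a partition in C_<(k,r|p,t) such that π^{(2)}_p ≥ 2t+6, then 2t+2 and 2t+4 cannot both occur as parts of π. -/

import Mathlib

namespace Bressoud

/-- A partition: a weakly decreasing list of positive integers. -/
structure Partition where
  parts : List ℕ
  pos : ∀ x ∈ parts, 0 < x
  sorted : parts.Pairwise (· ≥ ·)

namespace Partition

/-- `|π|`, the sum of the parts of `π`. -/
def size (π : Partition) : ℕ := π.parts.sum

/-- `ℓ(π)`, the number of parts of `π`. -/
def numParts (π : Partition) : ℕ := π.parts.length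

end Partition

lemma exists_pos_not_mem (s : List ℕ) : ∃ n, 0 < n ∧ n ∉ s := by
  refine ⟨s.sum + 1, Nat.succ_pos _, fun h => ?_⟩
  have := List.single_le_sum (l := s) (fun x _ => Nat.zero_le x) _ h
  omega

/-- The least positive integer not occurring in `s`. -/
def mex1 (s : List ℕ) : ℕ := Nat.find (exists_pos_not_mem s)

/-- Parts `p ≥ q` conflict (must receive different marks) when `p - q ≤ 2`,
with strict inequality when `p` is odd. -/
def conflict (p q : ℕ) : Bool :=
  if p % 2 = 1 then decide (p - q < 2) else decide (p - q ≤ 2)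

/-- Greedy computation of the Göllnitz–Gordon marking: the parts are processed
from smallest to largest (second argument: remaining parts in increasing
order; first argument: already processed parts with their marks), and each
part receives the least positive mark different from the marks of all already
processed conflicting parts. -/
def ggAux : List (ℕ × ℕ) → List ℕ → List (ℕ × ℕ)
  | acc, [] => acc
  | acc, p :: rest =>
      ggAux ((p, mex1 ((acc.filter fun q => conflict p q.1).map Prod.snd)) :: acc) rest

/-- The Göllnitz–Gordon marking `GG(π)` of `π`, as a list of (part, mark)
pairs in decreasing order of parts. -/
def ggMarks (π : Partition) : List (ℕ × ℕ) := ggAux [] π.parts.reverse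

/-- There is an `m`-marked part equal to `x` in `GG(π)`. -/
def Marked (π : Partition) (x m : ℕ) : Prop := (x, m) ∈ ggMarks π

instance (π : Partition) (x m : ℕ) : Decidable (Marked π x m) := by
  unfold Marked; infer_instance

/-- The `i`-th row of `GG(π)`: the `i`-marked parts, in decreasing order. -/
def row (π : Partition) (i : ℕ) : List ℕ :=
  ((ggMarks π).filter fun q => q.2 == i).map Prod.fst

/-- `N_i(π)`: the number of `i`-marked parts of `π`. -/
def Nmk (π : Partition) (i : ℕ) : ℕ := (row π i).length

/-- `π^{(i)}_j` as a natural number (meaningful for `1 ≤ j ≤ N_i(π)`;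
junk value `0` otherwise). -/
def nth (π : Partition) (i j : ℕ) : ℕ := (row π i).getD (j - 1) 0

/-- The canonical embedding of the natural numbers into `EReal`. -/
noncomputable def natE (n : ℕ) : EReal := ((n : ℝ) : EReal)

/-- `π^{(i)}_j` as an extended real, with the conventions `π^{(i)}_0 = +∞`
and `π^{(i)}_j = -∞` for `j > N_i(π)`. -/
noncomputable def rowVal (π : Partition) (i j : ℕ) : EReal :=
  if j = 0 then ⊤
  else
    match (row π i)[j - 1]? with
    | some x => natE x
    | none => ⊥

/-- The largest `l ≥ 0` such that there is no odd part of `π` greater than or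
equal to `π^{(2)}_l` (the indices `1 ≤ j ≤ N₂(π)` with this property form an
initial segment, so this is also their number). -/
def bigL (π : Partition) : ℕ :=
  ((List.range' 1 (Nmk π 2)).filter fun j =>
    decide (∀ x ∈ π.parts, x % 2 = 1 → x < nth π 2 j)).length

/-- `startPair π b = (starting type of π^{(2)}_b, s_b(π))` for `1 ≤ b ≤ N₂(π)`.
Starting types are encoded by integers: `-1` stands for `s₋₁`, and `0,1,2,3`
for `s₀,s₁,s₂,s₃`; the value `9` is a junk value used when no case applies. -/
def startPair (π : Partition) : ℕ → ℤ × ℕ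
  | 0 => (9, 0)
  | b + 1 =>
    let v := nth π 2 (b + 1)
    if bigL π < b + 1 then (-1, 0)
    else
      let okLow : Bool :=
        if b = 0 then !decide ((v + 2) ∈ π.parts)
        else !decide (Marked π (v + 2) 1) || decide ((startPair π b).2 = v + 2)
      let ok2 : Bool :=
        if b = 0 then decide (Marked π (v + 2) 1)
        else decide (Marked π (v + 2) 1) && !decide ((startPair π b).2 = v + 2)
      if decide (Marked π (v - 1) 1) && okLow then (0, v - 1)
      else if decide (Marked π (v - 2) 1) && okLow then (1, v - 2)
      else if ok2 then (2, v + 2)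
      else if decide (Marked π v 1) then (3, v)
      else (9, 0)

/-- The starting type of `π^{(2)}_b`, encoded as an integer. -/
def startType (π : Partition) (b : ℕ) : ℤ := (startPair π b).1

/-- The set `C(k,r)`: partitions with no repeated odd part, in which the parts
equal to `1` and `2` have marks at most `r - 1`, and whose Göllnitz–Gordon
marking has at most `k - 1` rows. -/
def C (k r : ℕ) : Set Partition :=
  { π | (∀ x, x % 2 = 1 → π.parts.count x ≤ 1) ∧
        (∀ x m, Marked π x m → x ≤ 2 → m ≤ r - 1) ∧
        (∀ x m, Marked π x m → m ≤ k - 1) }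

/-- The set `C_<(k,r|p,t)`. -/
noncomputable def Clt (k r p t : ℕ) : Set Partition :=
  { π | π ∈ C k r ∧
        (∀ x ∈ π.parts, x % 2 = 1 → x < 2 * t + 1) ∧
        rowVal π 2 (p + 1) < natE (2 * t + 1) ∧
        natE (2 * t + 1) < rowVal π 2 p ∧
        (rowVal π 2 p = natE (2 * t + 2) →
          startType π p = 2 ∨ startType π p = 3) ∧
        (rowVal π 2 (p + 1) = natE (2 * t) →
          startType π (p + 1) = 0 ∨ startType π (p + 1) = 1) }

/-- The set `C_=(k,r|p,t)`. -/
noncomputable def Ceq (k r p t : ℕ) : Set Partition :=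
  { π | π ∈ C k r ∧
        (2 * t + 1) ∈ π.parts ∧
        (∀ x ∈ π.parts, x % 2 = 1 → x ≤ 2 * t + 1) ∧
        (∀ m, Marked π (2 * t + 1) m → m ≤ 2) ∧
        natE (2 * t + 2) ≤ rowVal π 2 p ∧
        rowVal π 2 (p + 1) ≤ natE (2 * t + 2) ∧
        ((∃ j, 1 ≤ j ∧ j ≤ Nmk π 2 ∧ nth π 2 j = 2 * t + 2 ∧ startType π j = 0) →
          rowVal π 2 (p + 1) = natE (2 * t + 2) ∧
          ∃ i, 1 ≤ i ∧ i ≤ p + 1 ∧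
            nth π 2 i = 2 * t + 2 + 4 * (p + 1 - i) ∧
            π.parts.count (2 * t + 2 + 4 * (p + 1 - i)) = 1) ∧
        ((∃ j, 1 ≤ j ∧ j ≤ Nmk π 2 ∧ nth π 2 j = 2 * t + 2 ∧ startType π j = 2) →
          rowVal π 2 p = natE (2 * t + 2)) ∧
        ((2 * t + 2) ∈ π.parts → ¬ Marked π (2 * t + 2) 2 →
          rowVal π 2 p = natE (2 * t + 4) ∧ startType π p = 3 ∧
          ∃ i, 1 ≤ i ∧ i ≤ p ∧
            nth π 2 i = 2 * t + 4 + 4 * (p - i) ∧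
            (2 * t + 4 + 4 * (p - i) + 2) ∉ π.parts) }

/-- The first starting cluster index `p₁` of `π` (with `p₀ = p + 1`): the least
`j ≥ 1` such that `π^{(2)}_j = π^{(2)}_p + 4(p - j)` and all of
`π^{(2)}_j, …, π^{(2)}_p` have the same starting type as `π^{(2)}_p`. -/
def firstCluster (π : Partition) (p : ℕ) : ℕ :=
  ((List.range' 1 p).filter fun j =>
    (List.range' j (p + 1 - j)).all fun i =>
      decide (nth π 2 i = nth π 2 p + 4 * (p - i)) &&
      decide (startType π i = startType π p)).headD p

/-- The set `ℰ(k,r)` of partitions in `C(k,r)` with no odd parts. -/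
def E (k r : ℕ) : Set Partition :=
  { π | π ∈ C k r ∧ ∀ x ∈ π.parts, x % 2 = 0 }

/-- `C_<(k,r|m) = ⋃_{p+t=m} C_<(k,r|p,t)`. -/
noncomputable def Cltm (k r m : ℕ) : Set Partition :=
  { π | ∃ p t, p + t = m ∧ π ∈ Clt k r p t }

/-- `C_=(k,r|m) = ⋃_{p+t=m} C_=(k,r|p,t)`. -/
noncomputable def Ceqm (k r m : ℕ) : Set Partition :=
  { π | ∃ p t, p + t = m ∧ π ∈ Ceq k r p t }

/-- `I_N`: partitions into distinct odd parts, each at least `2N + 1`. -/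
def Iset (N : ℕ) : Set Partition :=
  { ζ | (∀ x ∈ ζ.parts, x % 2 = 1 ∧ 2 * N + 1 ≤ x) ∧ ζ.parts.Nodup }

/-- `F(3,3)`: pairs `(π, ζ)` with `π ∈ ℰ(3,3)` and `ζ ∈ I_{N₂(π)}`. -/
noncomputable def F33 : Set (Partition × Partition) :=
  { pq | pq.1 ∈ E 3 3 ∧ pq.2 ∈ Iset (Nmk pq.1 2) }

/-! In the Göllnitz–Gordon marking, an even part `x + 2` whose odd neighbour `x + 1` is absent
conflicts below only with the copies of `x`, so it receives mark `1` unless `x` is `1`-marked,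
and mark `2` if `x` is `1`- but not `2`-marked. For `π ∈ C_<(k,r|p,t)` no `2`-marked part lies
in `[2t+1, 2t+5]` and the odd parts `2t+1`, `2t+3` are absent; if `2t+2` and `2t+4` both occur,
this forces `2t+2` to avoid marks `1` and `2`, hence `2t` to carry both marks `1` and `2`.
Then `2t = π^{(2)}_{p+1}`, whose starting type `s₀` or `s₁` puts a `1`-marked part at `2t-1`
or `2t-2`, in conflict with the `1`-marked `2t`. -/

lemma mex1_not_mem (s : List ℕ) : mex1 s ∉ s := (Nat.find_spec (exists_pos_not_mem s)).2

lemma mex1_eq {s : List ℕ} {m : ℕ} (h0 : 0 < m) (hm : m ∉ s)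
    (hlt : ∀ j, 0 < j → j < m → j ∈ s) : mex1 s = m := by
  rw [mex1, Nat.find_eq_iff]
  exact ⟨⟨h0, hm⟩, fun n hn hP => hP.2 (hlt n hP.1 hn)⟩

lemma conflict_iff_of_even {x q : ℕ} (hx : x % 2 = 0) : conflict x q = true ↔ x - q ≤ 2 := by
  simp [conflict, hx]

section ggAux

lemma ggAux_append (l₁ l₂ : List ℕ) (acc : List (ℕ × ℕ)) :
    ggAux acc (l₁ ++ l₂) = ggAux (ggAux acc l₁) l₂ := by
  induction l₁ generalizing acc with
  | nil => rfl
  | cons a l ih => exact ih _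

lemma suffix_ggAux (acc : List (ℕ × ℕ)) (l : List ℕ) : acc <:+ ggAux acc l := by
  induction l generalizing acc with
  | nil => exact List.suffix_rfl
  | cons a l ih => exact (List.suffix_cons _ _).trans (ih _)

lemma map_fst_ggAux (acc : List (ℕ × ℕ)) (l : List ℕ) :
    (ggAux acc l).map Prod.fst = l.reverse ++ acc.map Prod.fst := by
  induction l generalizing acc with
  | nil => rfl
  | cons a l ih => simp [ggAux, ih]

lemma exists_mark_eq_mex1_of_mem_ggAux {l : List ℕ} {acc : List (ℕ × ℕ)} {x m : ℕ}
    (h : (x, m) ∈ ggAux acc l) :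
    (x, m) ∈ acc ∨ ∃ l₁ l₂, l = l₁ ++ x :: l₂ ∧
      m = mex1 (((ggAux acc l₁).filter fun q => conflict x q.1).map Prod.snd) := by
  induction l generalizing acc with
  | nil => exact .inl h
  | cons a l ih =>
    rcases ih h with h' | ⟨l₁, l₂, rfl, hm⟩
    · rcases List.mem_cons.mp h' with h'' | h''
      · obtain ⟨rfl, rfl⟩ := Prod.mk.inj h''
        exact .inr ⟨[], l, rfl, rfl⟩
      · exact .inl h''
    · exact .inr ⟨a :: l₁, l₂, rfl, hm⟩

lemma fst_mem_of_mem_ggAux {acc : List (ℕ × ℕ)} {l : List ℕ} {x m : ℕ}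
    (h : (x, m) ∈ ggAux acc l) : (x, m) ∈ acc ∨ x ∈ l := by
  rcases exists_mark_eq_mex1_of_mem_ggAux h with h | ⟨l₁, l₂, rfl, -⟩
  · exact .inl h
  · exact .inr (by simp)

end ggAux

lemma map_fst_ggMarks (π : Partition) : (ggMarks π).map Prod.fst = π.parts := by
  simp [ggMarks, map_fst_ggAux]

lemma Marked.mem_parts {π : Partition} {x m : ℕ} (h : Marked π x m) : x ∈ π.parts :=
  map_fst_ggMarks π ▸ List.mem_map_of_mem (f := Prod.fst) h

section

variable {π : Partition} {l₁ l₂ : List ℕ} {x q n : ℕ}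

lemma marked_of_mem_ggAux_prefix (h : π.parts.reverse = l₁ ++ l₂) (hq : (q, n) ∈ ggAux [] l₁) :
    Marked π q n := by
  rw [Marked, ggMarks, h, ggAux_append]
  exact (suffix_ggAux _ l₂).subset hq

lemma mem_ggAux_prefix_of_marked (h : π.parts.reverse = l₁ ++ x :: l₂) (hq : Marked π q n)
    (hlt : q < x) : (q, n) ∈ ggAux [] l₁ := by
  rw [Marked, ggMarks, h, ggAux_append] at hq
  refine (fst_mem_of_mem_ggAux hq).resolve_right fun hmem => ?_
  have hsorted : (l₁ ++ x :: l₂).Pairwise (· ≤ ·) := h ▸ List.pairwise_reverse.mpr π.sorted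
  have := (List.pairwise_append.mp hsorted).2.1
  rcases List.mem_cons.mp hmem with rfl | hmem
  · exact lt_irrefl _ hlt
  · exact absurd ((List.pairwise_cons.mp this).1 q hmem) (not_le.mpr hlt)

lemma lt_of_mem_ggAux_prefix (h : π.parts.reverse = l₁ ++ x :: l₂) (hx : x ∉ l₁)
    (hq : (q, n) ∈ ggAux [] l₁) : q < x := by
  have hq₁ : q ∈ l₁ := (fst_mem_of_mem_ggAux hq).resolve_left List.not_mem_nil
  have hsorted : (l₁ ++ x :: l₂).Pairwise (· ≤ ·) := h ▸ List.pairwise_reverse.mpr π.sorted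
  exact lt_of_le_of_ne ((List.pairwise_append.mp hsorted).2.2 q hq₁ x List.mem_cons_self)
    (fun e => hx (e ▸ hq₁))

end

def Blocked (π : Partition) (x m : ℕ) : Prop := ∃ q < x, conflict x q = true ∧ Marked π q m

section

variable {π : Partition} {x m : ℕ}

lemma Marked.not_blocked (hx : Marked π x m) : ¬ Blocked π x m := by
  rintro ⟨q, hlt, hc, hq⟩
  rcases exists_mark_eq_mex1_of_mem_ggAux hx with h | ⟨l₁, l₂, h, hm⟩
  · simp at h
  · refine mex1_not_mem (((ggAux [] l₁).filter fun q => conflict x q.1).map Prod.snd) ?_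
    exact hm ▸ List.mem_map.mpr
      ⟨(q, m), List.mem_filter.mpr ⟨mem_ggAux_prefix_of_marked h hq hlt, hc⟩, rfl⟩

/-- The mark obtained here is that of the first copy of `x` to be processed; later copies of `x`
conflict with it and get other marks. -/
lemma marked_of_forall_blocked (hx : x ∈ π.parts) (h0 : 0 < m)
    (hblocked : ∀ j, 0 < j → j < m → Blocked π x j) (hfree : ¬ Blocked π x m) :
    Marked π x m := by
  obtain ⟨l₁, l₂, h, hx₁⟩ := List.eq_append_cons_of_mem (List.mem_reverse.mpr hx)
  have hmex : mex1 (((ggAux [] l₁).filter fun q => conflict x q.1).map Prod.snd) = m := by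
    refine mex1_eq h0 ?_ fun j hj0 hjm => ?_
    · simp only [List.mem_map, List.mem_filter, Prod.exists]
      rintro ⟨q, n, ⟨hq, hc⟩, rfl⟩
      exact hfree ⟨q, lt_of_mem_ggAux_prefix h hx₁ hq, hc, marked_of_mem_ggAux_prefix h hq⟩
    · obtain ⟨q, hlt, hc, hq⟩ := hblocked j hj0 hjm
      exact List.mem_map.mpr
        ⟨(q, j), List.mem_filter.mpr ⟨mem_ggAux_prefix_of_marked h hq hlt, hc⟩, rfl⟩
  rw [Marked, ggMarks, h, ggAux_append, ← hmex]
  exact (suffix_ggAux _ l₂).subset List.mem_cons_self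

end

section

variable {π : Partition} {x : ℕ}

lemma blocked_add_two_iff (hx : x % 2 = 0) (hodd : x + 1 ∉ π.parts) {m : ℕ} :
    Blocked π (x + 2) m ↔ Marked π x m := by
  constructor
  · rintro ⟨q, hlt, hc, hq⟩
    have : x + 2 - q ≤ 2 := (conflict_iff_of_even (by omega)).mp hc
    obtain rfl | rfl : q = x ∨ q = x + 1 := by omega
    · exact hq
    · exact absurd hq.mem_parts hodd
  · exact fun h => ⟨x, by omega, (conflict_iff_of_even (by omega)).mpr (by omega), h⟩

lemma marked_add_two_one (hx : x % 2 = 0) (hodd : x + 1 ∉ π.parts) (hmem : x + 2 ∈ π.parts)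
    (h : ¬ Marked π x 1) : Marked π (x + 2) 1 :=
  marked_of_forall_blocked hmem one_pos (fun _ hj hj1 => absurd hj1 (by omega))
    ((blocked_add_two_iff hx hodd).not.mpr h)

lemma marked_add_two_two (hx : x % 2 = 0) (hodd : x + 1 ∉ π.parts) (hmem : x + 2 ∈ π.parts)
    (h1 : Marked π x 1) (h2 : ¬ Marked π x 2) : Marked π (x + 2) 2 := by
  refine marked_of_forall_blocked hmem two_pos (fun j hj hj2 => ?_)
    ((blocked_add_two_iff hx hodd).not.mpr h2)
  obtain rfl : j = 1 := by omega
  exact (blocked_add_two_iff hx hodd).mpr h1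

lemma marked_one_and_two_of_not_marked_two (hx : x % 2 = 0)
    (h1 : x + 1 ∉ π.parts) (h3 : x + 3 ∉ π.parts) (h2 : x + 2 ∈ π.parts) (h4 : x + 4 ∈ π.parts)
    (hn2 : ¬ Marked π (x + 2) 2) (hn4 : ¬ Marked π (x + 4) 2) :
    Marked π x 1 ∧ Marked π x 2 := by
  have hn1 : ¬ Marked π (x + 2) 1 := fun h =>
    hn4 (marked_add_two_two (x := x + 2) (by omega) h3 h4 h hn2)
  have ha1 : Marked π x 1 := by
    by_contra h
    exact hn1 (marked_add_two_one hx h1 h2 h)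
  refine ⟨ha1, ?_⟩
  by_contra h
  exact hn2 (marked_add_two_two hx h1 h2 ha1 h)

end

@[simp]
lemma natE_le_natE {a b : ℕ} : natE a ≤ natE b ↔ a ≤ b := by
  simp [natE]

@[simp]
lemma natE_lt_natE {a b : ℕ} : natE a < natE b ↔ a < b := by
  simp [natE]

lemma natE_ne_bot (n : ℕ) : natE n ≠ ⊥ := EReal.coe_ne_bot _

lemma row_sortedGE (π : Partition) (i : ℕ) : (row π i).SortedGE := by
  refine List.Pairwise.sortedGE (π.sorted.sublist ?_)
  rw [← map_fst_ggMarks, row]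
  exact List.filter_sublist.map _

section

variable {π : Partition} {i j : ℕ}

lemma Marked.mem_row {x : ℕ} (h : Marked π x i) : x ∈ row π i :=
  List.mem_map.mpr ⟨(x, i), List.mem_filter.mpr ⟨h, by simp⟩, rfl⟩

lemma rowVal_succ (h : j < (row π i).length) : rowVal π i (j + 1) = natE (row π i)[j] := by
  simp [rowVal, List.getElem?_eq_getElem h]

lemma rowVal_succ_of_length_le (h : (row π i).length ≤ j) : rowVal π i (j + 1) = ⊥ := by
  simp [rowVal, List.getElem?_eq_none h]

lemma rowVal_succ_eq_natE_nth (h : rowVal π i (j + 1) ≠ ⊥) :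
    rowVal π i (j + 1) = natE (nth π i (j + 1)) := by
  by_cases hj : j < (row π i).length
  · rw [rowVal_succ hj, nth, Nat.add_sub_cancel, List.getD_eq_getElem _ _ hj]
  · exact absurd (rowVal_succ_of_length_le (not_lt.mp hj)) h

lemma Marked.le_rowVal_succ_of_lt {x p : ℕ} (h : Marked π x i) (hlt : natE x < rowVal π i p) :
    natE x ≤ rowVal π i (p + 1) := by
  obtain ⟨j, hj, rfl⟩ := List.getElem_of_mem h.mem_row
  have hanti := (row_sortedGE π i).getElem_ge_getElem_of_le
  rcases lt_or_ge j p with hjp | hpj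
  · obtain ⟨p, rfl⟩ : ∃ p', p = p' + 1 := ⟨p - 1, by omega⟩
    by_cases hp : p < (row π i).length
    · rw [rowVal_succ hp, natE_lt_natE] at hlt
      exact absurd (hanti (by omega)) (not_le.mpr hlt)
    · rw [rowVal_succ_of_length_le (not_lt.mp hp)] at hlt
      exact absurd hlt not_lt_bot
  · rw [rowVal_succ (by omega), natE_le_natE]
    exact hanti hpj

end

lemma marked_one_of_startType_succ {π : Partition} {b : ℕ}
    (h : startType π (b + 1) = 0 ∨ startType π (b + 1) = 1) :
    Marked π (nth π 2 (b + 1) - 1) 1 ∨ Marked π (nth π 2 (b + 1) - 2) 1 := by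
  simp only [startType, startPair] at h
  split_ifs at h <;> simp_all

theorem not_both_occur_general (k r p t : ℕ) (π : Partition) (hπ : π ∈ Clt k r p t)
    (hge : natE (2 * t + 6) ≤ rowVal π 2 p) :
    ¬ ((2 * t + 2) ∈ π.parts ∧ (2 * t + 4) ∈ π.parts) := by
  rintro ⟨h2, h4⟩
  obtain ⟨-, hodd, hlow, -, -, hstart⟩ := hπ
  have hbelow : ∀ x, Marked π x 2 → x < 2 * t + 6 → natE x ≤ rowVal π 2 (p + 1) :=
    fun x hx hlt => hx.le_rowVal_succ_of_lt ((natE_lt_natE.mpr hlt).trans_le hge)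
  have hgap : ∀ x, 2 * t < x → x < 2 * t + 6 → ¬ Marked π x 2 := fun x h₁ h₂ hx => by
    have := natE_lt_natE.mp ((hbelow x hx h₂).trans_lt hlow)
    omega
  have hnotOdd : ∀ x, 2 * t < x → x % 2 = 1 → x ∉ π.parts := fun x h₁ h₂ hx => by
    have := hodd x hx h₂
    omega
  obtain ⟨hm1, hm2⟩ := marked_one_and_two_of_not_marked_two (x := 2 * t) (by omega)
    (hnotOdd _ (by omega) (by omega)) (hnotOdd _ (by omega) (by omega)) h2 h4
    (hgap _ (by omega) (by omega)) (hgap _ (by omega) (by omega))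
  have hle := hbelow _ hm2 (by omega)
  have hval := rowVal_succ_eq_natE_nth (ne_bot_of_le_ne_bot (natE_ne_bot _) hle)
  have hnth : nth π 2 (p + 1) = 2 * t := by
    rw [hval, natE_le_natE] at hle
    rw [hval, natE_lt_natE] at hlow
    omega
  have hpos : 0 < 2 * t := π.pos _ hm1.mem_parts
  obtain h | h := hnth ▸ marked_one_of_startType_succ (hstart (hnth ▸ hval)) <;>
    exact hm1.not_blocked ⟨_, by omega, (conflict_iff_of_even (by omega)).mpr (by omega), h⟩

/-- Corollary 2.7: if `π ∈ C_<(k,r|p,t)` and `π^{(2)}_p ≥ 2t + 6`, then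
`2t+2` and `2t+4` cannot both occur in `π`. -/
theorem not_both_occur (k r p t : ℕ) (hrk : r ≤ k) (hr : 3 ≤ r)
    (π : Partition) (hπ : π ∈ Clt k r p t)
    (hge : natE (2 * t + 6) ≤ rowVal π 2 p) :
    ¬ ((2 * t + 2) ∈ π.parts ∧ (2 * t + 4) ∈ π.parts) :=
  not_both_occur_general k r p t π hπ hge
end Bressoud
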